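/- Let m, M, N be positive integers and let A_1, …, A_M be N×N real symmetric positive semidefinite matrices such that for each k there is an index set S_k ⊆ {1, …, N} with |S_k| ≤ m and (A_k)_{ij} = 0 whenever i ∉ S_k or j ∉ S_k. Let A = Σ_{k=1}^M A_k and assume A_{jj} > 0 for all j. Let S = diag(√A_{11}, …, √A_{NN}). Then 1 ≤ λ_max(S⁻¹AS⁻¹) ≤ m. -/

import Mathlib

/-!
With `D = diag(A_jj^{-1/2})` and `y = D x`, the Rayleigh form of `D A D` is `∑ₖ yᵀ A_k y`.
For a positive semidefinite `A_k`, `(A_k)_ij² ≤ (A_k)_ii (A_k)_jj`, so by AM–GM each of the at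
most `m²` nonzero terms `y_i (A_k)_ij y_j` is bounded by the mean of `(A_k)_ii y_i²` and
`(A_k)_jj y_j²`; this gives `yᵀ A_k y ≤ m ∑ᵢ (A_k)_ii y_i²`, and summing over `k` yields
`xᵀ D A D x ≤ m ∑ᵢ A_ii y_i² = m ‖x‖²`. For the lower bound, `D A D` has unit diagonal, so its
eigenvalues sum to `N` and the largest one is at least `1`.
-/

open Matrix

namespace Matrix

variable {ι : Type*}

theorem PosSemidef.apply_sq_le_mul {B : Matrix ι ι ℝ} (hB : B.PosSemidef) (i j : ι) :
    B i j ^ 2 ≤ B i i * B j j := by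
  have hsymm : B j i = B i j := by simpa using hB.isHermitian.apply i j
  -- the principal `2 × 2` minor on `{i, j}` is positive semidefinite
  have hdet := (hB.submatrix ![i, j]).det_nonneg
  simp only [det_fin_two, submatrix_apply, cons_val_zero, cons_val_one, hsymm] at hdet
  nlinarith

theorem PosSemidef.mul_apply_mul_le {B : Matrix ι ι ℝ} (hB : B.PosSemidef) (x : ι → ℝ) (i j : ι) :
    x i * B i j * x j ≤ (B i i * x i ^ 2 + B j j * x j ^ 2) / 2 := by
  have hsq : (x i * B i j * x j) ^ 2 ≤ (B i i * x i ^ 2) * (B j j * x j ^ 2) :=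
    calc (x i * B i j * x j) ^ 2 = B i j ^ 2 * (x i ^ 2 * x j ^ 2) := by ring
      _ ≤ B i i * B j j * (x i ^ 2 * x j ^ 2) := by gcongr; exact hB.apply_sq_le_mul i j
      _ = (B i i * x i ^ 2) * (B j j * x j ^ 2) := by ring
  have hi : 0 ≤ B i i * x i ^ 2 := mul_nonneg hB.diag_nonneg (sq_nonneg _)
  have hj : 0 ≤ B j j * x j ^ 2 := mul_nonneg hB.diag_nonneg (sq_nonneg _)
  nlinarith [sq_nonneg (B i i * x i ^ 2 - B j j * x j ^ 2)]

variable [Fintype ι]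

theorem dotProduct_mulVec_eq_sum_sum {R : Type*} [CommSemiring R] (B : Matrix ι ι R)
    (x : ι → R) : x ⬝ᵥ B *ᵥ x = ∑ i, ∑ j, x i * B i j * x j := by
  simp only [dotProduct, mulVec, Finset.mul_sum, mul_assoc]

theorem dotProduct_diagonal_mul_mul_diagonal_mulVec {R : Type*} [CommSemiring R]
    [DecidableEq ι] (d x : ι → R) (B : Matrix ι ι R) :
    x ⬝ᵥ (diagonal d * B * diagonal d) *ᵥ x = (d * x) ⬝ᵥ B *ᵥ (d * x) := by
  have hvec : x ᵥ* diagonal d = d * x := funext fun i => by simp [vecMul_diagonal, mul_comm]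
  have hmul : diagonal d *ᵥ x = d * x := funext fun i => by simp [mulVec_diagonal]
  rw [← mulVec_mulVec, ← mulVec_mulVec, dotProduct_mulVec, hvec, hmul]

theorem PosSemidef.dotProduct_mulVec_le_card_mul {B : Matrix ι ι ℝ} (hB : B.PosSemidef)
    {s : Finset ι} (hs : ∀ i j, i ∉ s ∨ j ∉ s → B i j = 0) (x : ι → ℝ) :
    x ⬝ᵥ B *ᵥ x ≤ s.card * ∑ i, B i i * x i ^ 2 := by
  set a : ι → ℝ := fun i => B i i * x i ^ 2
  have hquad : x ⬝ᵥ B *ᵥ x = ∑ i ∈ s, ∑ j ∈ s, x i * B i j * x j := by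
    rw [dotProduct_mulVec_eq_sum_sum, ← Finset.sum_subset s.subset_univ fun i _ hi =>
      Finset.sum_eq_zero fun j _ => by simp [hs i j (.inl hi)]]
    exact Finset.sum_congr rfl fun i _ =>
      (Finset.sum_subset s.subset_univ fun j _ hj => by simp [hs i j (.inr hj)]).symm
  have hdiag : ∑ i, a i = ∑ i ∈ s, a i :=
    (Finset.sum_subset s.subset_univ fun i _ hi => by simp [a, hs i i (.inl hi)]).symm
  calc x ⬝ᵥ B *ᵥ x ≤ ∑ i ∈ s, ∑ j ∈ s, (a i + a j) / 2 := by
        rw [hquad]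
        exact Finset.sum_le_sum fun i _ => Finset.sum_le_sum fun j _ => hB.mul_apply_mul_le x i j
    _ = s.card * ∑ i, a i := by
        simp only [← Finset.sum_div, Finset.sum_add_distrib, Finset.sum_const, nsmul_eq_mul,
          ← Finset.mul_sum, hdiag]
        ring

theorem dotProduct_sum_mulVec_le {κ : Type*} [Fintype κ] {A : κ → Matrix ι ι ℝ}
    (hA : ∀ k, (A k).PosSemidef) {S : κ → Finset ι} {m : ℕ} (hS : ∀ k, (S k).card ≤ m)
    (hsupp : ∀ k i j, i ∉ S k ∨ j ∉ S k → A k i j = 0) (x : ι → ℝ) :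
    x ⬝ᵥ (∑ k, A k) *ᵥ x ≤ m * ∑ i, (∑ k, A k) i i * x i ^ 2 :=
  calc x ⬝ᵥ (∑ k, A k) *ᵥ x = ∑ k, x ⬝ᵥ A k *ᵥ x := by rw [sum_mulVec, dotProduct_sum]
    _ ≤ ∑ k, (m : ℝ) * ∑ i, A k i i * x i ^ 2 := Finset.sum_le_sum fun k _ =>
        ((hA k).dotProduct_mulVec_le_card_mul (hsupp k) x).trans <|
          mul_le_mul_of_nonneg_right (by exact_mod_cast hS k) <|
            Finset.sum_nonneg fun i _ => mul_nonneg (hA k).diag_nonneg (sq_nonneg _)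
    _ = m * ∑ i, (∑ k, A k) i i * x i ^ 2 := by
        simp only [sum_apply, Finset.sum_mul, ← Finset.mul_sum]
        rw [Finset.sum_comm]

namespace IsHermitian

variable [DecidableEq ι] {E : Matrix ι ι ℝ}

theorem eigenvalues_le_of_forall_dotProduct_mulVec_le (hE : E.IsHermitian) {c : ℝ}
    (h : ∀ x, x ⬝ᵥ E *ᵥ x ≤ c * (x ⬝ᵥ x)) (i : ι) : hE.eigenvalues i ≤ c := by
  set v := hE.eigenvectorBasis i
  have hv : ⇑v ⬝ᵥ ⇑v = 1 := by
    have hinner := real_inner_self_eq_norm_sq v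
    rw [hE.eigenvectorBasis.orthonormal.1 i, EuclideanSpace.inner_eq_star_dotProduct] at hinner
    simpa using hinner
  simpa [hE.eigenvalues_eq, hv] using h v

theorem trace_le_card_mul_iSup_eigenvalues (hE : E.IsHermitian) :
    E.trace ≤ Fintype.card ι * ⨆ i, hE.eigenvalues i := by
  have hbdd : BddAbove (Set.range hE.eigenvalues) := (Set.finite_range _).bddAbove
  calc E.trace = ∑ i, hE.eigenvalues i := by simp [hE.trace_eq_sum_eigenvalues]
    _ ≤ ∑ _i : ι, ⨆ i, hE.eigenvalues i := Finset.sum_le_sum fun i _ => le_ciSup hbdd i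
    _ = Fintype.card ι * ⨆ i, hE.eigenvalues i := by simp

end IsHermitian

end Matrix

theorem largest_eigenvalue_jacobi_preconditioned_bound_general
    {m M N : ℕ} (hN : 0 < N)
    (A : Fin M → Matrix (Fin N) (Fin N) ℝ)
    (hA : ∀ k, (A k).PosSemidef)
    (S : Fin M → Finset (Fin N)) (hScard : ∀ k, (S k).card ≤ m)
    (hsupp : ∀ k, ∀ i j : Fin N, i ∉ S k ∨ j ∉ S k → A k i j = 0)
    (hdiag : ∀ j, 0 < (∑ k, A k) j j)
    (E : Matrix (Fin N) (Fin N) ℝ)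
    (hE : E = Matrix.diagonal (fun j => (Real.sqrt ((∑ k, A k) j j))⁻¹) *
        (∑ k, A k) *
        Matrix.diagonal (fun j => (Real.sqrt ((∑ k, A k) j j))⁻¹))
    (hEh : E.IsHermitian) :
    1 ≤ (⨆ i, hEh.eigenvalues i) ∧ (⨆ i, hEh.eigenvalues i) ≤ m := by
  have : Nonempty (Fin N) := ⟨⟨0, hN⟩⟩
  set T := ∑ k, A k
  set d : Fin N → ℝ := fun j => (Real.sqrt (T j j))⁻¹
  have hscale : ∀ j, T j j * d j ^ 2 = 1 := fun j => by
    simp [d, inv_pow, Real.sq_sqrt (hdiag j).le, (hdiag j).ne']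
  have hunit_diag : ∀ j, E j j = 1 := fun j => by
    rw [← hscale j, hE]
    simp only [mul_diagonal, diagonal_mul]
    ring
  have hquad : ∀ x, x ⬝ᵥ E *ᵥ x ≤ m * (x ⬝ᵥ x) := fun x =>
    calc x ⬝ᵥ E *ᵥ x ≤ m * ∑ i, T i i * (d * x) i ^ 2 := by
          rw [hE, dotProduct_diagonal_mul_mul_diagonal_mulVec]
          exact dotProduct_sum_mulVec_le hA hScard hsupp _
      _ = m * (x ⬝ᵥ x) := by
          congr 1
          refine Finset.sum_congr rfl fun i _ => ?_
          rw [Pi.mul_apply, mul_pow, ← mul_assoc, hscale, one_mul, sq]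
  refine ⟨?_, ciSup_le (hEh.eigenvalues_le_of_forall_dotProduct_mulVec_le hquad)⟩
  have htrace := hEh.trace_le_card_mul_iSup_eigenvalues
  simp only [trace, diag, hunit_diag, Finset.sum_const, Finset.card_univ, Fintype.card_fin,
    nsmul_eq_mul, mul_one] at htrace
  exact (le_mul_iff_one_le_right (by exact_mod_cast hN)).1 htrace

/-- The largest eigenvalue of the Jacobi (diagonal) preconditioned matrix
`S⁻¹AS⁻¹`, where `A` is a sum of positive semidefinite matrices each supported
on an index set of size at most `m` and `S = diag(√A_jj)`, lies in `[1, m]`. -/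
theorem largest_eigenvalue_jacobi_preconditioned_bound
    {m M N : ℕ} (hm : 0 < m) (hM : 0 < M) (hN : 0 < N)
    (A : Fin M → Matrix (Fin N) (Fin N) ℝ)
    (hA : ∀ k, (A k).PosSemidef)
    (S : Fin M → Finset (Fin N)) (hScard : ∀ k, (S k).card ≤ m)
    (hsupp : ∀ k, ∀ i j : Fin N, i ∉ S k ∨ j ∉ S k → A k i j = 0)
    (hdiag : ∀ j, 0 < (∑ k, A k) j j)
    (E : Matrix (Fin N) (Fin N) ℝ)
    (hE : E = Matrix.diagonal (fun j => (Real.sqrt ((∑ k, A k) j j))⁻¹) *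
        (∑ k, A k) *
        Matrix.diagonal (fun j => (Real.sqrt ((∑ k, A k) j j))⁻¹))
    (hEh : E.IsHermitian) :
    1 ≤ (⨆ i, hEh.eigenvalues i) ∧ (⨆ i, hEh.eigenvalues i) ≤ m :=
  largest_eigenvalue_jacobi_preconditioned_bound_general hN A hA S hScard hsupp hdiag E hE hEh
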